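/- Consider an almost paracontact metric Walker structure on ℝ³ in which either (a) ξ₃ ≡ 0 (so that the constraint forces ξ₂² ≡ 1), or (b) ξ₁ ≡ 0 and ξ₂ ≡ 0 (so that the constraint forces f ξ₃² ≡ 1). Then the paracontact condition dη(∂i,∂j) = Φ(∂i,∂j) for all coordinate fields cannot hold at every point of ℝ³; that is, such structures are never paracontact metric (Corollary 4.1). -/

import Mathlib

open Real

/-- Points of the Walker manifold `M = ℝ³` with coordinates `(x,y,z)`. -/
abbrev Pt : Type := ℝ × ℝ × ℝ

/-- Vector fields on `ℝ³`, given by their components in the frame `∂x, ∂y, ∂z`. -/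
abbrev VF : Type := Pt → Pt

/-- Partial derivative ∂/∂x. -/
noncomputable def pdx (F : Pt → ℝ) (p : Pt) : ℝ := fderiv ℝ F p ((1:ℝ), (0:ℝ), (0:ℝ))

/-- Partial derivative ∂/∂y. -/
noncomputable def pdy (F : Pt → ℝ) (p : Pt) : ℝ := fderiv ℝ F p ((0:ℝ), (1:ℝ), (0:ℝ))

/-- Partial derivative ∂/∂z. -/
noncomputable def pdz (F : Pt → ℝ) (p : Pt) : ℝ := fderiv ℝ F p ((0:ℝ), (0:ℝ), (1:ℝ))

/-- Directional derivative of a scalar function along a vector field. -/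
noncomputable def dd (X : VF) (F : Pt → ℝ) (p : Pt) : ℝ := fderiv ℝ F p (X p)

/-- Components of a tangent vector. -/
def c1 (v : Pt) : ℝ := v.1
def c2 (v : Pt) : ℝ := v.2.1
def c3 (v : Pt) : ℝ := v.2.2

/-- The coordinate vector fields `∂x, ∂y, ∂z`. -/
noncomputable def E : Fin 3 → VF :=
  ![fun _ => ((1:ℝ), (0:ℝ), (0:ℝ)), fun _ => ((0:ℝ), (1:ℝ), (0:ℝ)),
    fun _ => ((0:ℝ), (0:ℝ), (1:ℝ))]

/-- The Walker metric with `ε = 1`: `g(∂x,∂z) = g(∂z,∂x) = 1`, `g(∂y,∂y) = 1`,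
`g(∂z,∂z) = f`, all other components zero. -/
noncomputable def gm (f : Pt → ℝ) (X Y : VF) (p : Pt) : ℝ :=
  c1 (X p) * c3 (Y p) + c3 (X p) * c1 (Y p) + c2 (X p) * c2 (Y p)
    + f p * c3 (X p) * c3 (Y p)

/-- The Levi-Civita connection of the Walker metric:
`∇_{∂x}∂z = ∇_{∂z}∂x = (1/2) f_x ∂x`, `∇_{∂y}∂z = ∇_{∂z}∂y = (1/2) f_y ∂x`,
`∇_{∂z}∂z = (1/2)(f f_x + f_z) ∂x - (1/2) f_y ∂y - (1/2) f_x ∂z`, all other covariant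
derivatives of coordinate fields zero, extended by `C^∞`-linearity below and the
Leibniz rule above. -/
noncomputable def cov (f : Pt → ℝ) (X Y : VF) : VF := fun p =>
  ( dd X (fun q => c1 (Y q)) p
      + (1/2) * pdx f p * (c1 (X p) * c3 (Y p) + c3 (X p) * c1 (Y p))
      + (1/2) * pdy f p * (c2 (X p) * c3 (Y p) + c3 (X p) * c2 (Y p))
      + (1/2) * (f p * pdx f p + pdz f p) * (c3 (X p) * c3 (Y p)),
    dd X (fun q => c2 (Y q)) p - (1/2) * pdy f p * (c3 (X p) * c3 (Y p)),
    dd X (fun q => c3 (Y q)) p - (1/2) * pdx f p * (c3 (X p) * c3 (Y p)) )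

/-- Lie bracket of vector fields on `ℝ³`. -/
noncomputable def brk (X Y : VF) : VF := fun p =>
  ( dd X (fun q => c1 (Y q)) p - dd Y (fun q => c1 (X q)) p,
    dd X (fun q => c2 (Y q)) p - dd Y (fun q => c2 (X q)) p,
    dd X (fun q => c3 (Y q)) p - dd Y (fun q => c3 (X q)) p )

/-- The `(1,1)`-tensor `φ` of the almost paracontact metric Walker structure:
`φ∂x = -ξ₂∂x + ξ₃∂y`, `φ∂y = (ξ₁ + fξ₃)∂x - ξ₃∂z`, `φ∂z = -fξ₂∂x - ξ₁∂y + ξ₂∂z`. -/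
noncomputable def phiV (f ξ₁ ξ₂ ξ₃ : Pt → ℝ) (X : VF) : VF := fun p =>
  ( -ξ₂ p * c1 (X p) + (ξ₁ p + f p * ξ₃ p) * c2 (X p) - f p * ξ₂ p * c3 (X p),
    ξ₃ p * c1 (X p) - ξ₁ p * c3 (X p),
    -ξ₃ p * c2 (X p) + ξ₂ p * c3 (X p) )

/-- The 1-form `η = ξ₃ dx + ξ₂ dy + (ξ₁ + fξ₃) dz`. -/
noncomputable def etaV (f ξ₁ ξ₂ ξ₃ : Pt → ℝ) (X : VF) (p : Pt) : ℝ :=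
  ξ₃ p * c1 (X p) + ξ₂ p * c2 (X p) + (ξ₁ p + f p * ξ₃ p) * c3 (X p)

/-- The structure tensor `F(X,Y,Z) = g((∇_X φ)Y, Z)`, `(∇_X φ)Y = ∇_X(φY) - φ(∇_X Y)`. -/
noncomputable def Ften (f ξ₁ ξ₂ ξ₃ : Pt → ℝ) (X Y Z : VF) (p : Pt) : ℝ :=
  gm f (fun q => cov f X (phiV f ξ₁ ξ₂ ξ₃ Y) q - phiV f ξ₁ ξ₂ ξ₃ (cov f X Y) q) Z p

/-- The fundamental 2-form `Φ(X,Y) = g(φX, Y)`. -/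
noncomputable def Phi2 (f ξ₁ ξ₂ ξ₃ : Pt → ℝ) (X Y : VF) : Pt → ℝ :=
  gm f (phiV f ξ₁ ξ₂ ξ₃ X) Y

/-- `dη(∂i,∂j) = (1/2)(∂i(η(∂j)) - ∂j(η(∂i)))` on coordinate fields. -/
noncomputable def deta (f ξ₁ ξ₂ ξ₃ : Pt → ℝ) (i j : Fin 3) (p : Pt) : ℝ :=
  (1/2) * (dd (E i) (etaV f ξ₁ ξ₂ ξ₃ (E j)) p - dd (E j) (etaV f ξ₁ ξ₂ ξ₃ (E i)) p)

/-- `dη(X,Y) = (1/2)(X(η(Y)) - Y(η(X)) - η([X,Y]))` on general vector fields. -/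
noncomputable def detaB (f ξ₁ ξ₂ ξ₃ : Pt → ℝ) (X Y : VF) (p : Pt) : ℝ :=
  (1/2) * (dd X (etaV f ξ₁ ξ₂ ξ₃ Y) p - dd Y (etaV f ξ₁ ξ₂ ξ₃ X) p
    - etaV f ξ₁ ξ₂ ξ₃ (brk X Y) p)

/-- The Nijenhuis tensor `N(X,Y) = φ²[X,Y] + [φX,φY] - φ[φX,Y] - φ[X,φY]`. -/
noncomputable def nij (f ξ₁ ξ₂ ξ₃ : Pt → ℝ) (X Y : VF) : VF := fun p =>
  phiV f ξ₁ ξ₂ ξ₃ (phiV f ξ₁ ξ₂ ξ₃ (brk X Y)) p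
    + brk (phiV f ξ₁ ξ₂ ξ₃ X) (phiV f ξ₁ ξ₂ ξ₃ Y) p
    - phiV f ξ₁ ξ₂ ξ₃ (brk (phiV f ξ₁ ξ₂ ξ₃ X) Y) p
    - phiV f ξ₁ ξ₂ ξ₃ (brk X (phiV f ξ₁ ξ₂ ξ₃ Y)) p

/-- The curvature tensor, with the paper's sign convention
`R(X,Y)Z = ∇_{[X,Y]}Z - ∇_X∇_Y Z + ∇_Y∇_X Z`. -/
noncomputable def Rop (f : Pt → ℝ) (X Y Z : VF) : VF := fun p =>
  cov f (brk X Y) Z p - cov f X (cov f Y Z) p + cov f Y (cov f X Z) p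

/-- Second partial derivatives of `f`. -/
noncomputable def fxx (f : Pt → ℝ) : Pt → ℝ := pdx (pdx f)
noncomputable def fxy (f : Pt → ℝ) : Pt → ℝ := pdy (pdx f)
noncomputable def fyy (f : Pt → ℝ) : Pt → ℝ := pdy (pdy f)

/-- The Ricci tensor of the Walker metric: `ρ(∂x,∂z) = ρ(∂z,∂x) = (1/2) f_xx`,
`ρ(∂y,∂z) = ρ(∂z,∂y) = (1/2) f_xy`, `ρ(∂z,∂z) = (1/2)(f f_xx - f_yy)`, all other
components zero, extended tensorially. -/
noncomputable def rhoT (f : Pt → ℝ) (X Y : VF) (p : Pt) : ℝ :=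
  (1/2) * fxx f p * (c1 (X p) * c3 (Y p) + c3 (X p) * c1 (Y p))
    + (1/2) * fxy f p * (c2 (X p) * c3 (Y p) + c3 (X p) * c2 (Y p))
    + (1/2) * (f p * fxx f p - fyy f p) * (c3 (X p) * c3 (Y p))

/-- The Ricci operator: `Q∂x = (1/2)f_xx ∂x`, `Q∂y = (1/2)f_xy ∂x`,
`Q∂z = -(1/2)f_yy ∂x + (1/2)f_xy ∂y + (1/2)f_xx ∂z`. -/
noncomputable def Qop (f : Pt → ℝ) (X : VF) : VF := fun p =>
  ( (1/2) * fxx f p * c1 (X p) + (1/2) * fxy f p * c2 (X p) - (1/2) * fyy f p * c3 (X p),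
    (1/2) * fxy f p * c3 (X p),
    (1/2) * fxx f p * c3 (X p) )

/-- `dΦ(∂x,∂y,∂z) = ∂x(Φ(∂y,∂z)) - ∂y(Φ(∂x,∂z)) + ∂z(Φ(∂x,∂y))`. -/
noncomputable def dPhi (f ξ₁ ξ₂ ξ₃ : Pt → ℝ) (p : Pt) : ℝ :=
  pdx (Phi2 f ξ₁ ξ₂ ξ₃ (E 1) (E 2)) p - pdy (Phi2 f ξ₁ ξ₂ ξ₃ (E 0) (E 2)) p
    + pdz (Phi2 f ξ₁ ξ₂ ξ₃ (E 0) (E 1)) p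

/-- `(η∧Φ)(∂x,∂y,∂z) = η(∂x)Φ(∂y,∂z) - η(∂y)Φ(∂x,∂z) + η(∂z)Φ(∂x,∂y)`. -/
noncomputable def etaWedgePhi (f ξ₁ ξ₂ ξ₃ : Pt → ℝ) (p : Pt) : ℝ :=
  etaV f ξ₁ ξ₂ ξ₃ (E 0) p * Phi2 f ξ₁ ξ₂ ξ₃ (E 1) (E 2) p
    - etaV f ξ₁ ξ₂ ξ₃ (E 1) p * Phi2 f ξ₁ ξ₂ ξ₃ (E 0) (E 2) p
    + etaV f ξ₁ ξ₂ ξ₃ (E 2) p * Phi2 f ξ₁ ξ₂ ξ₃ (E 0) (E 1) p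

/-- The constant function `0`. -/
noncomputable def zeroF : Pt → ℝ := fun _ => 0
/-- The constant function `1`. -/
noncomputable def oneF : Pt → ℝ := fun _ => 1
/-- The constant function `-1`. -/
noncomputable def negOneF : Pt → ℝ := fun _ => -1

/-!
On the coordinate fields the paracontact condition `dη = Φ` reads
`∂ₓξ₂ - ∂_yξ₃ = 2ξ₃`, `∂ₓ(ξ₁ + fξ₃) - ∂_zξ₃ = -2ξ₂` and `∂_y(ξ₁ + fξ₃) - ∂_zξ₂ = 2ξ₁`.

If `ξ₃ ≡ 0`, then `ξ₂ = ±1` has vanishing derivative, so `∂ₓξ₁ = -2ξ₂` and `∂_yξ₁ = 2ξ₁`.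
Then `∂_y∂ₓξ₁ = 0` while `∂ₓ∂_yξ₁ = -4ξ₂ ≠ 0`, contradicting the symmetry of second derivatives.

If `ξ₁ ≡ ξ₂ ≡ 0`, then `∂_yξ₃ = -2ξ₃` and `∂_y(fξ₃) = 0`, so differentiating `fξ₃² = 1`
in `y` gives `0 = ∂_y(fξ₃) ξ₃ + fξ₃ ∂_yξ₃ = -2fξ₃² = -2`.
-/

section Coordinates

variable (f ξ₁ ξ₂ ξ₃ : Pt → ℝ) (p : Pt)

theorem etaV_E_zero : etaV f ξ₁ ξ₂ ξ₃ (E 0) = ξ₃ := by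
  ext q; simp [etaV, E, c1, c2, c3]

theorem etaV_E_one : etaV f ξ₁ ξ₂ ξ₃ (E 1) = ξ₂ := by
  ext q; simp [etaV, E, c1, c2, c3]

theorem etaV_E_two : etaV f ξ₁ ξ₂ ξ₃ (E 2) = fun q => ξ₁ q + f q * ξ₃ q := by
  ext q; simp [etaV, E, c1, c2, c3]

theorem deta_zero_one : deta f ξ₁ ξ₂ ξ₃ 0 1 p = (pdx ξ₂ p - pdy ξ₃ p) / 2 := by
  rw [deta, etaV_E_zero, etaV_E_one]
  change 1 / 2 * (pdx ξ₂ p - pdy ξ₃ p) = _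
  ring

theorem deta_zero_two :
    deta f ξ₁ ξ₂ ξ₃ 0 2 p = (pdx (fun q => ξ₁ q + f q * ξ₃ q) p - pdz ξ₃ p) / 2 := by
  rw [deta, etaV_E_zero, etaV_E_two]
  change 1 / 2 * (pdx (fun q => ξ₁ q + f q * ξ₃ q) p - pdz ξ₃ p) = _
  ring

theorem deta_one_two :
    deta f ξ₁ ξ₂ ξ₃ 1 2 p = (pdy (fun q => ξ₁ q + f q * ξ₃ q) p - pdz ξ₂ p) / 2 := by
  rw [deta, etaV_E_one, etaV_E_two]
  change 1 / 2 * (pdy (fun q => ξ₁ q + f q * ξ₃ q) p - pdz ξ₂ p) = _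
  ring

theorem Phi2_E_zero_E_one : Phi2 f ξ₁ ξ₂ ξ₃ (E 0) (E 1) p = ξ₃ p := by
  simp [Phi2, gm, phiV, E, c1, c2, c3]

theorem Phi2_E_zero_E_two : Phi2 f ξ₁ ξ₂ ξ₃ (E 0) (E 2) p = -ξ₂ p := by
  simp [Phi2, gm, phiV, E, c1, c2, c3]

theorem Phi2_E_one_E_two : Phi2 f ξ₁ ξ₂ ξ₃ (E 1) (E 2) p = ξ₁ p := by
  simp [Phi2, gm, phiV, E, c1, c2, c3]

end Coordinates

def IsParacontactMetric (f ξ₁ ξ₂ ξ₃ : Pt → ℝ) : Prop :=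
  ∀ (i j : Fin 3) (p : Pt), deta f ξ₁ ξ₂ ξ₃ i j p = Phi2 f ξ₁ ξ₂ ξ₃ (E i) (E j) p

namespace IsParacontactMetric

variable {f ξ₁ ξ₂ ξ₃ : Pt → ℝ} (h : IsParacontactMetric f ξ₁ ξ₂ ξ₃) (p : Pt)
include h

theorem pdx_sub_pdy : pdx ξ₂ p - pdy ξ₃ p = 2 * ξ₃ p := by
  have := h 0 1 p
  rw [deta_zero_one, Phi2_E_zero_E_one] at this
  linarith

theorem pdx_sub_pdz : pdx (fun q => ξ₁ q + f q * ξ₃ q) p - pdz ξ₃ p = -2 * ξ₂ p := by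
  have := h 0 2 p
  rw [deta_zero_two, Phi2_E_zero_E_two] at this
  linarith

theorem pdy_sub_pdz : pdy (fun q => ξ₁ q + f q * ξ₃ q) p - pdz ξ₂ p = 2 * ξ₁ p := by
  have := h 1 2 p
  rw [deta_one_two, Phi2_E_one_E_two] at this
  linarith

end IsParacontactMetric

theorem fderiv_eq_zero_of_sq_eq_one {F : Type*} [NormedAddCommGroup F] [NormedSpace ℝ F]
    {g : F → ℝ} {p : F} (hg : DifferentiableAt ℝ g p) (hsq : ∀ q, g q ^ 2 = 1) :
    fderiv ℝ g p = 0 := by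
  have hconst : fderiv ℝ (fun q => g q ^ 2) p = 0 := by
    simp only [hsq, fderiv_const_apply]
  have hne : (2 : ℝ) * g p ≠ 0 := by
    intro h0
    nlinarith [hsq p]
  rw [fderiv_fun_pow 2 hg] at hconst
  simpa [hne] using hconst

theorem pdy_pdx_eq_pdx_pdy {F : Pt → ℝ} (hF : ContDiff ℝ 2 F) (p : Pt) :
    pdy (pdx F) p = pdx (pdy F) p := by
  have hd : DifferentiableAt ℝ (fderiv ℝ F) p :=
    (hF.fderiv_right (m := 1) le_rfl).differentiable one_ne_zero p
  unfold pdx pdy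
  rw [fderiv_clm_apply hd (differentiableAt_const _),
    fderiv_clm_apply hd (differentiableAt_const _)]
  simpa using (hF.contDiffAt.isSymmSndFDerivAt (by simp)) ((0 : ℝ), (1 : ℝ), (0 : ℝ))
    ((1 : ℝ), (0 : ℝ), (0 : ℝ))

theorem pdy_mul {F G : Pt → ℝ} {p : Pt} (hF : DifferentiableAt ℝ F p)
    (hG : DifferentiableAt ℝ G p) :
    pdy (fun q => F q * G q) p = pdy F p * G p + F p * pdy G p := by
  simp only [pdy, fderiv_fun_mul hF hG, add_apply, smul_apply, smul_eq_mul]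
  ring

theorem not_isParacontactMetric_of_ξ₃_eq_zero {f ξ₁ ξ₂ ξ₃ : Pt → ℝ} (hξ₃ : ξ₃ = 0)
    (hξ₁ : ContDiff ℝ 2 ξ₁) (hξ₂ : Differentiable ℝ ξ₂) (hsq : ∀ p, ξ₂ p ^ 2 = 1) :
    ¬ IsParacontactMetric f ξ₁ ξ₂ ξ₃ := by
  subst hξ₃
  intro h
  have hdξ₂ : ∀ p, fderiv ℝ ξ₂ p = 0 := fun p => fderiv_eq_zero_of_sq_eq_one (hξ₂ p) hsq
  have hx : pdx ξ₁ = fun p => -2 * ξ₂ p := by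
    ext p; simpa [pdz] using h.pdx_sub_pdz p
  have hy : pdy ξ₁ = fun p => 2 * ξ₁ p := by
    ext p; simpa [pdz, hdξ₂] using h.pdy_sub_pdz p
  have hyx : pdy (pdx ξ₁) 0 = 0 := by
    rw [hx, pdy, fderiv_const_mul (hξ₂ 0), hdξ₂]
    simp
  have hxy : pdx (pdy ξ₁) 0 = -4 * ξ₂ 0 := by
    rw [hy, pdx, fderiv_const_mul (hξ₁.differentiable two_ne_zero 0), smul_apply, ← pdx,
      congrFun hx 0, smul_eq_mul]
    ring
  have hsymm := pdy_pdx_eq_pdx_pdy hξ₁ 0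
  rw [hyx, hxy] at hsymm
  nlinarith [hsq 0]

theorem not_isParacontactMetric_of_ξ₁_eq_zero_of_ξ₂_eq_zero {f ξ₁ ξ₂ ξ₃ : Pt → ℝ}
    (hξ₁ : ξ₁ = 0) (hξ₂ : ξ₂ = 0) (hf : Differentiable ℝ f) (hξ₃ : Differentiable ℝ ξ₃)
    (hcon : ∀ p, f p * ξ₃ p ^ 2 = 1) : ¬ IsParacontactMetric f ξ₁ ξ₂ ξ₃ := by
  subst hξ₁ hξ₂
  intro h
  have hy : pdy ξ₃ 0 = -2 * ξ₃ 0 := by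
    have := h.pdx_sub_pdy 0
    simp only [pdx, Pi.zero_def, fderiv_const_apply, zero_apply] at this
    linarith
  have hfy : pdy (fun q => f q * ξ₃ q) 0 = 0 := by simpa [pdz] using h.pdy_sub_pdz 0
  have hderiv : pdy (fun q => f q * ξ₃ q * ξ₃ q) 0 = -2 := by
    rw [pdy_mul (F := fun q => f q * ξ₃ q) ((hf 0).mul (hξ₃ 0)) (hξ₃ 0), hfy, hy]
    linear_combination -2 * hcon 0
  have hconst : pdy (fun q => f q * ξ₃ q * ξ₃ q) 0 = 0 := by
    simp_rw [mul_assoc, ← sq, hcon]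
    simp [pdy]
  linarith

/-- Corollary 4.1: almost paracontact metric 3-dimensional Walker manifolds for which
`ξ₃ ≡ 0` or `ξ₁ ≡ ξ₂ ≡ 0` are never paracontact metric. -/
theorem never_paracontact_metric (f ξ₁ ξ₂ ξ₃ : Pt → ℝ)
    (hf : ContDiff ℝ (⊤ : ℕ∞) f) (h1 : ContDiff ℝ (⊤ : ℕ∞) ξ₁)
    (h2 : ContDiff ℝ (⊤ : ℕ∞) ξ₂) (h3 : ContDiff ℝ (⊤ : ℕ∞) ξ₃)
    (hconstr : ∀ p : Pt, ξ₂ p ^ 2 + f p * ξ₃ p ^ 2 + 2 * ξ₁ p * ξ₃ p = 1)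
    (hcase : (∀ p : Pt, ξ₃ p = 0) ∨ ((∀ p : Pt, ξ₁ p = 0) ∧ (∀ p : Pt, ξ₂ p = 0))) :
    ¬ ∀ (i j : Fin 3) (p : Pt),
        deta f ξ₁ ξ₂ ξ₃ i j p = Phi2 f ξ₁ ξ₂ ξ₃ (E i) (E j) p := by
  rcases hcase with hξ₃ | ⟨hξ₁, hξ₂⟩
  · exact not_isParacontactMetric_of_ξ₃_eq_zero (funext hξ₃)
      (h1.of_le (WithTop.coe_le_coe.mpr le_top)) (h2.differentiable (by simp))
      fun p => by simpa [hξ₃] using hconstr p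
  · exact not_isParacontactMetric_of_ξ₁_eq_zero_of_ξ₂_eq_zero (funext hξ₁) (funext hξ₂)
      (hf.differentiable (by simp)) (h3.differentiable (by simp))
      fun p => by simpa [hξ₁, hξ₂] using hconstr p
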